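/- arXiv:1809.09726 — 5 statements merged into one kernel-verified Lean document; each statement's English description precedes it below -/
import Mathlib

section
/- Let n ≥ 1 be an integer, 0 < s < 2π, and c₀, c₁ ∈ ℝ. Then there exists a polynomial P of degree exactly n with complex coefficients such that P(e^{iz}) = e^{i(nz/2 + c₁)} · 𝔗_n(sec(s/4) · cos((z − c₀)/2)) for every z ∈ ℝ. -/
open MeasureTheory Polynomial

/-!
Put `u = e^{iz/2}` and `x = sec(s/4) cos((z - c₀)/2)`. With `α = sec(s/4) e^{-ic₀/2}` and
`β = sec(s/4) e^{ic₀/2}` one has `α u² + β = 2x u`, so `e^{inz/2} 𝔗_n(x) = u^n 𝔗_n((α u² + β) / 2u)`.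
Since `𝔗_n` has degree `n` and the parity of `n`, the right-hand side is a polynomial of degree `n`
in `u² = e^{iz}`, with leading coefficient `α^n / 2`. It is produced by running the Chebyshev
recurrence in homogenized form.
-/

namespace Polynomial.Chebyshev

variable {R : Type*} [CommRing R]

/-- The polynomial `P` with `P(u²) = u^n C_n(α u + β / u)`, where `C_n` is the Vieta–Lucas
polynomial `Polynomial.Chebyshev.C`. -/
noncomputable def homogenizedC (α β : R) : ℕ → R[X]
  | 0 => 2
  | 1 => Polynomial.C α * X + Polynomial.C β
  | n + 2 => (Polynomial.C α * X + Polynomial.C β) * homogenizedC α β (n + 1)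
      - X * homogenizedC α β n

variable (α β : R)

theorem natDegree_homogenizedC_le : ∀ n, (homogenizedC α β n).natDegree ≤ n
  | 0 => by simp [homogenizedC]
  | 1 => natDegree_linear_le
  | n + 2 => by
    have hlin : (Polynomial.C α * X + Polynomial.C β).natDegree ≤ 1 := natDegree_linear_le
    have h₁ := natDegree_homogenizedC_le (n + 1)
    have h₀ := natDegree_homogenizedC_le n
    refine (natDegree_sub_le _ _).trans (max_le ?_ ?_)
    · exact natDegree_mul_le.trans (by omega)
    · exact natDegree_mul_le.trans (by have := natDegree_X_le (R := R); omega)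

theorem coeff_homogenizedC_succ : ∀ n, (homogenizedC α β (n + 1)).coeff (n + 1) = α ^ (n + 1)
  | 0 => by simp [homogenizedC]
  | n + 1 => by
    have h₁ : (homogenizedC α β (n + 1)).coeff (n + 2) = 0 :=
      coeff_eq_zero_of_natDegree_lt ((natDegree_homogenizedC_le α β _).trans_lt (by omega))
    have h₀ : (homogenizedC α β n).coeff (n + 1) = 0 :=
      coeff_eq_zero_of_natDegree_lt ((natDegree_homogenizedC_le α β _).trans_lt (by omega))
    simp only [homogenizedC, coeff_sub, add_mul, coeff_add, mul_assoc, coeff_C_mul,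
      coeff_X_mul, coeff_homogenizedC_succ n, h₀, h₁]
    ring

theorem natDegree_homogenizedC [NoZeroDivisors R] {α : R} (hα : α ≠ 0) (n : ℕ) :
    (homogenizedC α β n).natDegree = n := by
  cases n with
  | zero => simp [homogenizedC]
  | succ n =>
    refine natDegree_eq_of_le_of_coeff_ne_zero (natDegree_homogenizedC_le α β _) ?_
    rw [coeff_homogenizedC_succ]
    exact pow_ne_zero _ hα

theorem eval_sq_homogenizedC {u y : R} (h : α * u ^ 2 + β = y * u) :
    ∀ n : ℕ, (homogenizedC α β n).eval (u ^ 2) = u ^ n * (C R n).eval y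
  | 0 => by simp [homogenizedC]
  | 1 => by simpa [homogenizedC, mul_comm u] using h
  | n + 2 => by
    have h₁ := eval_sq_homogenizedC h (n + 1)
    have h₀ := eval_sq_homogenizedC h n
    push_cast at h₁ ⊢
    simp only [homogenizedC, C_add_two, eval_sub, eval_mul, eval_add, eval_C, eval_X, h₁, h₀]
    linear_combination u ^ (n + 1) * (C R (n + 1)).eval y * h

theorem C_eval_two_mul (n : ℤ) (x : R) : (C R n).eval (2 * x) = 2 * (T R n).eval x := by
  simpa using congr_arg (eval x) (C_comp_two_mul_X R n)

end Polynomial.Chebyshev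

theorem Complex.ofReal_eval_chebyshevT (n : ℤ) (x : ℝ) :
    (((Chebyshev.T ℝ n).eval x : ℝ) : ℂ) = (Chebyshev.T ℂ n).eval (x : ℂ) := by
  rw [← Chebyshev.map_T (algebraMap ℝ ℂ), eval_map]
  exact (eval₂_at_apply (algebraMap ℝ ℂ) x).symm

theorem Complex.two_cos_half_sub_mul_exp (z c : ℂ) :
    2 * cos ((z - c) / 2) * exp (I * z / 2) =
      exp (-(I * c / 2)) * exp (I * z / 2) ^ 2 + exp (I * c / 2) := by
  rw [two_cos, ← exp_nat_mul, ← exp_add, add_mul, ← exp_add, ← exp_add]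
  ring_nf

theorem exists_extremal_polynomial_general (n : ℕ) (s : ℝ)
    (hs0 : 0 < s) (hs1 : s < 2 * Real.pi) (c₀ c₁ : ℝ) :
    ∃ P : Polynomial ℂ, P.natDegree = n ∧ ∀ z : ℝ,
      P.eval (Complex.exp (Complex.I * (z : ℂ))) =
        Complex.exp (Complex.I * (((n : ℝ) * z / 2 + c₁ : ℝ) : ℂ)) *
          (((Polynomial.Chebyshev.T ℝ (n : ℤ)).eval
            ((1 / Real.cos (s / 4)) * Real.cos ((z - c₀) / 2)) : ℝ) : ℂ) := by
  have hcos : Real.cos (s / 4) ≠ 0 :=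
    (Real.cos_pos_of_mem_Ioo ⟨by linarith [Real.pi_pos], by linarith⟩).ne'
  set a : ℝ := 1 / Real.cos (s / 4)
  have ha : (a : ℂ) ≠ 0 := Complex.ofReal_ne_zero.mpr (one_div_ne_zero hcos)
  refine ⟨Polynomial.C (Complex.exp (Complex.I * c₁) / 2) *
    Chebyshev.homogenizedC (a * Complex.exp (-(Complex.I * c₀ / 2)))
      (a * Complex.exp (Complex.I * c₀ / 2)) n, ?_, fun z => ?_⟩
  · rw [natDegree_C_mul (by simp), Chebyshev.natDegree_homogenizedC _ (by simpa using ha)]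
  set u := Complex.exp (Complex.I * z / 2)
  have hu : Complex.exp (Complex.I * z) = u ^ 2 := by
    rw [← Complex.exp_nat_mul]; ring_nf
  have hun : Complex.exp (Complex.I * (((n : ℝ) * z / 2 + c₁ : ℝ) : ℂ)) =
      Complex.exp (Complex.I * c₁) * u ^ n := by
    rw [← Complex.exp_nat_mul, ← Complex.exp_add]; push_cast; ring_nf
  have hquad : a * Complex.exp (-(Complex.I * c₀ / 2)) * u ^ 2 +
      a * Complex.exp (Complex.I * c₀ / 2) = (2 * (a * Real.cos ((z - c₀) / 2)) : ℝ) * u := by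
    push_cast
    linear_combination -(a : ℂ) * Complex.two_cos_half_sub_mul_exp z c₀
  rw [eval_mul, eval_C, hu, Chebyshev.eval_sq_homogenizedC _ _ hquad, hun, Complex.ofReal_mul,
    Complex.ofReal_ofNat, Chebyshev.C_eval_two_mul, Complex.ofReal_eval_chebyshevT]
  ring

/-- Existence of the extremal polynomial of degree exactly `n` for the sharp Remez
inequality on the circle. -/
theorem exists_extremal_polynomial (n : ℕ) (hn : 1 ≤ n) (s : ℝ)
    (hs0 : 0 < s) (hs1 : s < 2 * Real.pi) (c₀ c₁ : ℝ) :
    ∃ P : Polynomial ℂ, P.natDegree = n ∧ ∀ z : ℝ,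
      P.eval (Complex.exp (Complex.I * (z : ℂ))) =
        Complex.exp (Complex.I * (((n : ℝ) * z / 2 + c₁ : ℝ) : ℂ)) *
          (((Polynomial.Chebyshev.T ℝ (n : ℤ)).eval
            ((1 / Real.cos (s / 4)) * Real.cos ((z - c₀) / 2)) : ℝ) : ℂ) :=
  exists_extremal_polynomial_general n s hs0 hs1 c₀ c₁
end

section
/- Let n ≥ 1 be an integer, 0 < s < 2π, c₀, c₁ ∈ ℝ, and let P be a polynomial with complex coefficients such that P(e^{iz}) = e^{i(nz/2 + c₁)} · 𝔗_n(sec(s/4) · cos((z − c₀)/2)) for every z ∈ ℝ. Then the set {x ∈ [0, 2π) : |P(e^{ix})| ≤ 1} has Lebesgue measure exactly 2π − s, and sup_{|ζ|=1} |P(ζ)| = |P(e^{ic₀})| = 𝔗_n(sec(s/4)). -/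
open MeasureTheory Polynomial

/-! On the unit circle `|P(e^{ix})| = |𝔗_n(sec(s/4) · cos((x - c₀)/2))|`. For `n ≥ 1` one has
`|𝔗_n(y)| ≤ 1` exactly when `|y| ≤ 1`, and `𝔗_n` is increasing on `[1, ∞)` because
`𝔗_n(cosh t) = cosh(n t)`. Hence the sublevel set is the `2π`-periodic set
`{x | |cos((x - c₀)/2)| ≤ cos(s/4)}`, whose trace on the period `(c₀, c₀ + 2π]` is the interval
`[c₀ + s/2, c₀ + 2π - s/2]` of length `2π - s`, and `|P|` is largest where the cosine is `1`,
at `x = c₀`. -/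

open Real Set

namespace Polynomial.Chebyshev

theorem monotoneOn_eval_T_real (n : ℤ) : MonotoneOn (T ℝ n).eval (Ici 1) := by
  intro u (hu : 1 ≤ u) v (hv : 1 ≤ v) huv
  dsimp only
  rw [← cosh_arcosh hu, ← cosh_arcosh hv, T_real_cosh, T_real_cosh, cosh_le_cosh, abs_mul,
    abs_mul, abs_of_nonneg (arcosh_nonneg hu), abs_of_nonneg (arcosh_nonneg hv)]
  gcongr
  exact (arcosh_le_arcosh (by linarith) (by linarith)).2 huv

theorem abs_eval_T_real_le_eval_T_real (n : ℤ) {x A : ℝ} (hA : 1 ≤ A) (hx : |x| ≤ A) :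
    |(T ℝ n).eval x| ≤ (T ℝ n).eval A := by
  rcases le_or_gt |x| 1 with h | h
  · exact (abs_eval_T_real_le_one n h).trans (one_le_eval_T_real n hA)
  · have h_even : |(T ℝ n).eval x| = |(T ℝ n).eval (|x|)| := by
      rcases abs_choice x with hx | hx <;> simp [hx, T_eval_neg, abs_mul]
    rw [h_even, abs_of_nonneg (zero_le_one.trans (one_le_eval_T_real n h.le))]
    exact monotoneOn_eval_T_real n h.le hA hx

theorem abs_eval_T_real_one_div_mul_le_one_iff {n : ℤ} (hn : n ≠ 0) {c : ℝ} (hc : 0 < c)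
    (y : ℝ) : |(T ℝ n).eval (1 / c * y)| ≤ 1 ↔ |y| ≤ c := by
  rw [← abs_eval_T_real_le_one_iff hn, abs_mul, abs_of_pos (one_div_pos.2 hc),
    one_div_mul_eq_div, div_le_one hc]

end Polynomial.Chebyshev

theorem volume_inter_Ioc_eq_of_periodic {T : ℝ} (hT : 0 < T) {A : Set ℝ} (hA : MeasurableSet A)
    (hper : Function.Periodic (· ∈ A) T) (t u : ℝ) :
    volume (A ∩ Ioc t (t + T)) = volume (A ∩ Ioc u (u + T)) := by
  refine (isAddFundamentalDomain_Ioc hT t).measure_set_eq (isAddFundamentalDomain_Ioc hT u) hA ?_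
  rintro ⟨g, hg⟩
  obtain ⟨k, rfl⟩ := AddSubgroup.mem_zmultiples_iff.1 hg
  ext x
  simpa [add_comm] using hper.zsmul k x

theorem abs_cos_le_cos_iff {α θ : ℝ} (hα₀ : 0 ≤ α) (hαπ : α ≤ π) (hθ : θ ∈ Icc 0 π) :
    |cos θ| ≤ cos α ↔ α ≤ θ ∧ θ ≤ π - α := by
  have hα : α ∈ Icc 0 π := ⟨hα₀, hαπ⟩
  have hπα : π - α ∈ Icc 0 π := ⟨by linarith, by linarith⟩
  rw [abs_le, ← cos_pi_sub α, strictAntiOn_cos.le_iff_ge hπα hθ,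
    strictAntiOn_cos.le_iff_ge hθ hα, and_comm]

theorem setOf_abs_cos_half_sub_le_cos_inter_Ioc (c₀ : ℝ) {s : ℝ} (hs₀ : 0 < s) (hs : s ≤ 2 * π) :
    {x | |cos ((x - c₀) / 2)| ≤ cos (s / 4)} ∩ Ioc c₀ (c₀ + 2 * π) =
      Icc (c₀ + s / 2) (c₀ + 2 * π - s / 2) := by
  ext x
  simp only [mem_inter_iff, mem_ofPred_eq, mem_Ioc, mem_Icc]
  constructor
  · rintro ⟨h, h₁, h₂⟩
    have := (abs_cos_le_cos_iff (by linarith) (by linarith) ⟨by linarith, by linarith⟩).1 h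
    constructor <;> linarith
  · rintro ⟨h₁, h₂⟩
    refine ⟨(abs_cos_le_cos_iff (by linarith) (by linarith) ⟨by linarith, by linarith⟩).2
      ⟨by linarith, by linarith⟩, by linarith, by linarith⟩

theorem volume_setOf_abs_cos_half_sub_le_cos_inter_Ico (c₀ : ℝ) {s : ℝ} (hs₀ : 0 < s)
    (hs : s ≤ 2 * π) :
    volume ({x | |cos ((x - c₀) / 2)| ≤ cos (s / 4)} ∩ Ico 0 (2 * π)) =
      ENNReal.ofReal (2 * π - s) := by
  set A := {x | |cos ((x - c₀) / 2)| ≤ cos (s / 4)}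
  have hA : MeasurableSet A := measurableSet_le (by fun_prop) measurable_const
  have hper : Function.Periodic (· ∈ A) (2 * π) := fun x => by
    simp only [A, mem_ofPred_eq, show (x + 2 * π - c₀) / 2 = (x - c₀) / 2 + π by ring, cos_add_pi,
      abs_neg]
  calc volume (A ∩ Ico 0 (2 * π)) = volume (A ∩ Ioc 0 (0 + 2 * π)) := by
        rw [zero_add]; exact measure_congr (Filter.EventuallyEq.rfl.inter Ico_ae_eq_Ioc)
    _ = volume (A ∩ Ioc c₀ (c₀ + 2 * π)) :=
        volume_inter_Ioc_eq_of_periodic (by positivity) hA hper 0 c₀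
    _ = ENNReal.ofReal (2 * π - s) := by
        rw [setOf_abs_cos_half_sub_le_cos_inter_Ioc c₀ hs₀ hs, volume_Icc]
        congr 1
        ring

/-- The extremal polynomial has its sublevel set of measure exactly `2π - s`,
and its sup over the circle is attained at `e^{i c₀}` with value `𝔗_n(sec (s/4))`. -/
theorem extremal_polynomial_properties (n : ℕ) (hn : 1 ≤ n) (s : ℝ)
    (hs0 : 0 < s) (hs1 : s < 2 * Real.pi) (c₀ c₁ : ℝ)
    (P : Polynomial ℂ)
    (hP : ∀ z : ℝ,
      P.eval (Complex.exp (Complex.I * (z : ℂ))) =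
        Complex.exp (Complex.I * (((n : ℝ) * z / 2 + c₁ : ℝ) : ℂ)) *
          (((Polynomial.Chebyshev.T ℝ (n : ℤ)).eval
            ((1 / Real.cos (s / 4)) * Real.cos ((z - c₀) / 2)) : ℝ) : ℂ)) :
    volume {x ∈ Set.Ico (0 : ℝ) (2 * Real.pi) |
        ‖P.eval (Complex.exp (Complex.I * (x : ℂ)))‖ ≤ 1}
      = ENNReal.ofReal (2 * Real.pi - s) ∧
    (⨆ ζ : {ζ : ℂ // ‖ζ‖ = 1}, ‖P.eval (ζ : ℂ)‖) =
      ‖P.eval (Complex.exp (Complex.I * (c₀ : ℂ)))‖ ∧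
    ‖P.eval (Complex.exp (Complex.I * (c₀ : ℂ)))‖ =
      (Polynomial.Chebyshev.T ℝ (n : ℤ)).eval (1 / Real.cos (s / 4)) := by
  have hc : 0 < Real.cos (s / 4) := Real.cos_pos_of_mem_Ioo ⟨by linarith, by linarith⟩
  have ha : 1 ≤ 1 / Real.cos (s / 4) := one_le_one_div hc (Real.cos_le_one _)
  have hnorm (x : ℝ) : ‖P.eval (Complex.exp (Complex.I * x))‖ =
      |(Chebyshev.T ℝ n).eval (1 / Real.cos (s / 4) * Real.cos ((x - c₀) / 2))| := by
    rw [hP, norm_mul, mul_comm Complex.I, Complex.norm_exp_ofReal_mul_I, one_mul,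
      Complex.norm_real, Real.norm_eq_abs]
  have hmax : ‖P.eval (Complex.exp (Complex.I * c₀))‖ =
      (Chebyshev.T ℝ n).eval (1 / Real.cos (s / 4)) := by
    rw [hnorm, sub_self, zero_div, Real.cos_zero, mul_one,
      abs_of_nonneg (zero_le_one.trans (Chebyshev.one_le_eval_T_real n ha))]
  have hsublevel : {x ∈ Ico 0 (2 * π) | ‖P.eval (Complex.exp (Complex.I * x))‖ ≤ 1} =
      {x | |Real.cos ((x - c₀) / 2)| ≤ Real.cos (s / 4)} ∩ Ico 0 (2 * π) := by
    ext x
    rw [mem_sep_iff, hnorm, Chebyshev.abs_eval_T_real_one_div_mul_le_one_iff (by omega) hc,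
      and_comm]
    rfl
  refine ⟨by rw [hsublevel, volume_setOf_abs_cos_half_sub_le_cos_inter_Ico c₀ hs0 hs1.le], ?_, hmax⟩
  let ζ₀ : {ζ : ℂ // ‖ζ‖ = 1} :=
    ⟨Complex.exp (Complex.I * c₀), by rw [mul_comm, Complex.norm_exp_ofReal_mul_I]⟩
  have : Nonempty {ζ : ℂ // ‖ζ‖ = 1} := ⟨ζ₀⟩
  refine ciSup_eq_of_forall_le_of_forall_lt_exists_gt (fun ⟨ζ, hζ⟩ => ?_) fun w hw => ⟨ζ₀, hw⟩
  obtain ⟨θ, rfl⟩ := (Complex.norm_eq_one_iff ζ).1 hζ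
  show ‖P.eval (Complex.exp (θ * Complex.I))‖ ≤ _
  rw [mul_comm, hnorm, hmax]
  refine Chebyshev.abs_eval_T_real_le_eval_T_real n ha ?_
  rw [abs_mul, abs_of_pos (one_div_pos.2 hc)]
  exact mul_le_of_le_one_right (one_div_pos.2 hc).le (Real.abs_cos_le_one _)
end

section
/- Let n ≥ 1 be an integer, 0 < s < 2π, and c₀, c₁ ∈ ℝ. Define Q(x) = e^{ic₁} · 𝔗_{2n}(sec(s/4) · cos((x − c₀)/2)) for x ∈ ℝ. Then: (1) Q is a trigonometric polynomial of degree at most n, i.e., there exist complex coefficients c_k, |k| ≤ n, with Q(x) = Σ_{k=−n}^{n} c_k e^{ikx} for all x; (2) the set {x ∈ [0, 2π) : |Q(x)| ≤ 1} has Lebesgue measure exactly 2π − s; (3) sup_{x ∈ [0, 2π)} |Q(x)| = |Q(c₀)| = 𝔗_{2n}(sec(s/4)). -/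
open MeasureTheory Polynomial

/-! Since `𝔗_{2n}(y) = 𝔗_n(2y² - 1)` and `2 cos²(θ/2) = 1 + cos θ`, `Q` is a polynomial of
degree `n` in `cos (x - c₀)`, hence a trigonometric polynomial of degree `n`. By evenness of
`𝔗_{2n}`, `|Q x| = |𝔗_{2n}(a g(x))|` with `a = sec(s/4) > 1` and the `2π`-periodic
`g(x) = |cos((x - c₀)/2)| ≤ 1`. As `|𝔗_m(y)| ≤ 1` exactly for `|y| ≤ 1` and `𝔗_m` increases on
`[1, ∞)`, `|Q| ≤ 1` means `g ≤ cos(s/4)`, which cuts out length `2π - s` of each period, and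
`|Q|` is largest where `g = 1`, e.g. at `c₀`. -/

open Real Set Submodule Polynomial.Chebyshev

noncomputable def trigMonomial (k : ℤ) : ℝ → ℂ := fun x => Complex.exp (k * x * Complex.I)

def trigPolyDegreeLE (n : ℕ) : Submodule ℂ (ℝ → ℂ) :=
  span ℂ (trigMonomial '' Icc (-(n : ℤ)) n)

lemma trigMonomial_zero : trigMonomial 0 = 1 := by
  funext x; simp [trigMonomial]

lemma trigMonomial_add (j k : ℤ) : trigMonomial (j + k) = trigMonomial j * trigMonomial k := by
  funext x
  simp only [trigMonomial, Pi.mul_apply, ← Complex.exp_add]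
  push_cast
  ring_nf

lemma trigMonomial_mem_trigPolyDegreeLE {k : ℤ} {n : ℕ} (hk : |k| ≤ n) :
    trigMonomial k ∈ trigPolyDegreeLE n :=
  subset_span ⟨k, abs_le.mp hk, rfl⟩

lemma trigPolyDegreeLE_mono : Monotone trigPolyDegreeLE := fun m n hmn =>
  span_mono (image_mono (Icc_subset_Icc (by simpa using hmn) (by simpa using hmn)))

lemma trigPolyDegreeLE_mul_le (m n : ℕ) :
    trigPolyDegreeLE m * trigPolyDegreeLE n ≤ trigPolyDegreeLE (m + n) := by
  rw [trigPolyDegreeLE, trigPolyDegreeLE, span_mul_span, span_le]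
  rintro _ ⟨_, ⟨j, hj, rfl⟩, _, ⟨k, hk, rfl⟩, rfl⟩
  change trigMonomial j * trigMonomial k ∈ _
  rw [← trigMonomial_add]
  refine trigMonomial_mem_trigPolyDegreeLE (abs_le.mpr ?_)
  simp only [mem_Icc] at hj hk
  push_cast
  constructor <;> linarith [hj.1, hj.2, hk.1, hk.2]

lemma pow_mem_trigPolyDegreeLE {f : ℝ → ℂ} (hf : f ∈ trigPolyDegreeLE 1) :
    ∀ i : ℕ, f ^ i ∈ trigPolyDegreeLE i
  | 0 => by
    rw [pow_zero, ← trigMonomial_zero]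
    exact trigMonomial_mem_trigPolyDegreeLE (by simp)
  | i + 1 => by
    rw [pow_succ]
    exact trigPolyDegreeLE_mul_le i 1 (mul_mem_mul (pow_mem_trigPolyDegreeLE hf i) hf)

lemma eval_comp_mem_trigPolyDegreeLE {f : ℝ → ℂ} (hf : f ∈ trigPolyDegreeLE 1) {p : ℂ[X]}
    {n : ℕ} (hp : p.natDegree ≤ n) : (fun x => p.eval (f x)) ∈ trigPolyDegreeLE n := by
  have hsum : (fun x => p.eval (f x)) = ∑ i ∈ Finset.range (n + 1), p.coeff i • f ^ i := by
    funext x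
    simp [eval_eq_sum_range' (Nat.lt_succ_of_le hp), Finset.sum_apply]
  rw [hsum]
  refine sum_mem fun i hi => smul_mem _ _ (trigPolyDegreeLE_mono ?_ (pow_mem_trigPolyDegreeLE hf i))
  exact Nat.lt_succ_iff.mp (Finset.mem_range.mp hi)

lemma cos_sub_mem_trigPolyDegreeLE (c : ℝ) :
    (fun x : ℝ => (cos (x - c) : ℂ)) ∈ trigPolyDegreeLE 1 := by
  have hcos : (fun x : ℝ => (cos (x - c) : ℂ))
      = (Complex.exp (-c * Complex.I) / 2) • trigMonomial 1
        + (Complex.exp (c * Complex.I) / 2) • trigMonomial (-1) := by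
    funext x
    simp only [Complex.ofReal_cos, Complex.cos, trigMonomial, Pi.add_apply, Pi.smul_apply,
      smul_eq_mul]
    rw [div_mul_eq_mul_div, div_mul_eq_mul_div, ← Complex.exp_add, ← Complex.exp_add, add_div]
    push_cast
    ring_nf
  rw [hcos]
  exact add_mem (smul_mem _ _ (trigMonomial_mem_trigPolyDegreeLE (by norm_num)))
    (smul_mem _ _ (trigMonomial_mem_trigPolyDegreeLE (by norm_num)))

lemma exists_coeff_of_mem_trigPolyDegreeLE {f : ℝ → ℂ} {n : ℕ} (hf : f ∈ trigPolyDegreeLE n) :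
    ∃ c : ℤ → ℂ, ∀ x, f x = ∑ k ∈ Finset.Icc (-(n : ℤ)) n,
      c k * Complex.exp (k * x * Complex.I) := by
  obtain ⟨l, hl, rfl⟩ := (Finsupp.mem_span_image_iff_linearCombination ℂ).mp hf
  refine ⟨l, fun x => ?_⟩
  have hsupp : l.support ⊆ Finset.Icc (-(n : ℤ)) n := by
    rw [← Finset.coe_subset, Finset.coe_Icc]
    exact (Finsupp.mem_supported ℂ l).mp hl
  rw [Finsupp.linearCombination_apply,
    Finsupp.sum_of_support_subset l hsupp (fun k r => r • trigMonomial k) fun _ _ => zero_smul _ _]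
  simp [Finset.sum_apply, trigMonomial]

namespace Polynomial.Chebyshev

lemma abs_eval_T_real_abs (m : ℤ) (x : ℝ) : |(T ℝ m).eval (|x|)| = |(T ℝ m).eval x| := by
  rcases abs_choice x with h | h <;> simp [h, abs_mul]

lemma eval_T_real_monotoneOn (m : ℤ) : MonotoneOn (T ℝ m).eval (Ici 1) := by
  intro x hx y hy hxy
  change (T ℝ m).eval x ≤ (T ℝ m).eval y
  rw [← cosh_arcosh hx, ← cosh_arcosh hy, T_real_cosh, T_real_cosh, cosh_le_cosh, abs_mul,
    abs_mul, abs_of_nonneg (arcosh_nonneg hx), abs_of_nonneg (arcosh_nonneg hy)]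
  gcongr
  exact (arcosh_le_arcosh (by linarith [mem_Ici.mp hx]) (by linarith [mem_Ici.mp hy])).mpr hxy

lemma abs_eval_T_real_le_eval (m : ℤ) {a x : ℝ} (ha : 1 ≤ a) (hx : |x| ≤ a) :
    |(T ℝ m).eval x| ≤ (T ℝ m).eval a := by
  rcases le_or_gt |x| 1 with h | h
  · exact (abs_eval_T_real_le_one m h).trans (one_le_eval_T_real m ha)
  · rw [← abs_eval_T_real_abs, abs_of_nonneg (zero_le_one.trans (one_le_eval_T_real m h.le))]
    exact eval_T_real_monotoneOn m h.le ha hx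

lemma eval_T_two_mul_real_mul_cos_half (n : ℤ) (a θ : ℝ) :
    (T ℝ (2 * n)).eval (a * cos (θ / 2)) = (T ℝ n).eval (a ^ 2 * cos θ + (a ^ 2 - 1)) := by
  rw [mul_comm 2 n, T_mul, eval_comp, T_two]
  congr 1
  simp only [eval_sub, eval_mul, eval_pow, eval_X, eval_ofNat, eval_one, mul_pow, cos_sq,
    mul_div_cancel₀ θ two_ne_zero]
  ring

end Polynomial.Chebyshev

lemma eval_T_two_mul_mul_cos_half_sub_mem_trigPolyDegreeLE (n : ℕ) (a c : ℝ) :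
    (fun x : ℝ => (((T ℝ (2 * n : ℤ)).eval (a * cos ((x - c) / 2)) : ℝ) : ℂ))
      ∈ trigPolyDegreeLE n := by
  have hf : (fun x : ℝ => ((a ^ 2 * cos (x - c) + (a ^ 2 - 1) : ℝ) : ℂ))
      ∈ trigPolyDegreeLE 1 := by
    have hsplit : (fun x : ℝ => ((a ^ 2 * cos (x - c) + (a ^ 2 - 1) : ℝ) : ℂ))
        = ((a ^ 2 : ℝ) : ℂ) • (fun x : ℝ => (cos (x - c) : ℂ))
          + ((a ^ 2 - 1 : ℝ) : ℂ) • trigMonomial 0 := by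
      funext x
      simp [trigMonomial_zero]
    rw [hsplit]
    exact add_mem (smul_mem _ _ (cos_sub_mem_trigPolyDegreeLE c))
      (smul_mem _ _ (trigPolyDegreeLE_mono (Nat.zero_le 1)
        (trigMonomial_mem_trigPolyDegreeLE (by simp))))
  convert eval_comp_mem_trigPolyDegreeLE hf (p := T ℂ n) (n := n) (by simp [natDegree_T])
    using 2 with x
  rw [eval_T_two_mul_real_mul_cos_half, complex_ofReal_eval_T]

lemma abs_cos_le_cos_iff_s6 {γ u : ℝ} (hγ0 : 0 ≤ γ) (hγπ : γ ≤ π) (hu1 : -γ < u)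
    (hu2 : u ≤ π - γ) : |cos u| ≤ cos γ ↔ γ ≤ u := by
  constructor
  · intro h
    by_contra! hlt
    have hcos : cos γ < cos |u| :=
      cos_lt_cos_of_nonneg_of_le_pi (abs_nonneg u) hγπ (abs_lt.mpr ⟨hu1, hlt⟩)
    rw [cos_abs] at hcos
    linarith [le_abs_self (cos u)]
  · intro h
    have hupper : cos u ≤ cos γ := cos_le_cos_of_nonneg_of_le_pi hγ0 (by linarith) h
    have hlower : cos (π - γ) ≤ cos u :=
      cos_le_cos_of_nonneg_of_le_pi (by linarith) (by linarith) hu2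
    rw [cos_pi_sub] at hlower
    exact abs_le.mpr ⟨by linarith, hupper⟩

lemma abs_cos_half_sub_periodic (c : ℝ) :
    Function.Periodic (fun x => |cos ((x - c) / 2)|) (2 * π) :=
  fun x => by
    simp only [show (x + 2 * π - c) / 2 = (x - c) / 2 + π by ring, cos_add_pi, abs_neg]

lemma Function.Periodic.volume_preimage_inter_Ioc_eq {α : Type*} {g : ℝ → α} {T : ℝ}
    (hg : Function.Periodic g T) (hT : 0 < T) {B : Set α} (hB : MeasurableSet (g ⁻¹' B))
    (t u : ℝ) : volume (g ⁻¹' B ∩ Ioc t (t + T)) = volume (g ⁻¹' B ∩ Ioc u (u + T)) :=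
  (isAddFundamentalDomain_Ioc hT t).measure_set_eq (isAddFundamentalDomain_Ioc hT u) hB
    fun a => by ext x; simp [hg.map_vadd_zmultiples a x]

lemma Function.Periodic.iSup_Ico_eq {α : Type*} [ConditionallyCompleteLattice α] {f : ℝ → α}
    {T : ℝ} (hf : Function.Periodic f T) (hT : 0 < T) {c : ℝ} (hc : ∀ x, f x ≤ f c) :
    ⨆ x : Ico 0 T, f x = f c := by
  have hmem : toIcoMod hT 0 c ∈ Ico 0 T := toIcoMod_mem_Ico' hT c
  have : Nonempty (Ico 0 T) := ⟨⟨_, hmem⟩⟩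
  refine le_antisymm (ciSup_le fun x => hc x) ?_
  refine le_ciSup_of_le ⟨f c, ?_⟩ ⟨_, hmem⟩ (hf.sub_zsmul_eq _).ge
  rintro _ ⟨x, rfl⟩
  exact hc x

lemma volume_abs_cos_half_sub_le_inter_Ico (c : ℝ) {γ : ℝ} (hγ0 : 0 < γ) (hγπ : γ ≤ π) :
    volume ({x | |cos ((x - c) / 2)| ≤ cos γ} ∩ Ico 0 (2 * π))
      = ENNReal.ofReal (2 * π - 4 * γ) := by
  set A := (fun x => |cos ((x - c) / 2)|) ⁻¹' Iic (cos γ)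
  have hA : MeasurableSet A := measurableSet_Iic.preimage (by fun_prop)
  -- on this window `(x - c) / 2` runs through `(-γ, π - γ]`
  have hwindow :
      A ∩ Ioc (c - 2 * γ) (c - 2 * γ + 2 * π) = Icc (c + 2 * γ) (c + 2 * π - 2 * γ) := by
    ext x
    simp only [A, mem_inter_iff, mem_preimage, mem_Iic, mem_Ioc, mem_Icc]
    constructor
    · rintro ⟨hx, h1, h2⟩
      have := (abs_cos_le_cos_iff_s6 hγ0.le hγπ (by linarith) (by linarith)).mp hx
      constructor <;> linarith
    · rintro ⟨h1, h2⟩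
      exact ⟨(abs_cos_le_cos_iff_s6 hγ0.le hγπ (by linarith) (by linarith)).mpr (by linarith),
        by linarith, by linarith⟩
  calc volume (A ∩ Ico 0 (2 * π)) = volume (A ∩ Ioc 0 (0 + 2 * π)) := by
        rw [zero_add]; exact measure_congr ((Filter.EventuallyEq.refl _ A).inter Ico_ae_eq_Ioc)
    _ = volume (A ∩ Ioc (c - 2 * γ) (c - 2 * γ + 2 * π)) :=
        (abs_cos_half_sub_periodic c).volume_preimage_inter_Ioc_eq two_pi_pos hA 0 _
    _ = ENNReal.ofReal (2 * π - 4 * γ) := by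
        rw [hwindow, Real.volume_Icc]; ring_nf

/-- Properties of the extremal trigonometric polynomial
`Q x = e^{i c₁} 𝔗_{2n}(sec(s/4) cos((x - c₀)/2))`. -/
theorem extremal_trig_polynomial_properties (n : ℕ) (hn : 1 ≤ n) (s : ℝ)
    (hs0 : 0 < s) (hs1 : s < 2 * Real.pi) (c₀ c₁ : ℝ)
    (Q : ℝ → ℂ)
    (hQ : ∀ x : ℝ, Q x = Complex.exp (Complex.I * (c₁ : ℂ)) *
      (((Polynomial.Chebyshev.T ℝ (2 * n : ℤ)).eval
        ((1 / Real.cos (s / 4)) * Real.cos ((x - c₀) / 2)) : ℝ) : ℂ)) :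
    (∃ c : ℤ → ℂ, ∀ x : ℝ, Q x = ∑ k ∈ Finset.Icc (-(n : ℤ)) (n : ℤ),
      c k * Complex.exp ((k : ℂ) * (x : ℂ) * Complex.I)) ∧
    volume {x ∈ Set.Ico (0 : ℝ) (2 * Real.pi) | ‖Q x‖ ≤ 1}
      = ENNReal.ofReal (2 * Real.pi - s) ∧
    (⨆ x : Set.Ico (0 : ℝ) (2 * Real.pi), ‖Q x‖) = ‖Q c₀‖ ∧
    ‖Q c₀‖ = (Polynomial.Chebyshev.T ℝ (2 * n : ℤ)).eval (1 / Real.cos (s / 4)) := by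
  set a := 1 / cos (s / 4)
  have hcos_pos : 0 < cos (s / 4) := cos_pos_of_mem_Ioo ⟨by linarith, by linarith⟩
  have ha : 1 ≤ a := one_le_one_div hcos_pos (cos_le_one _)
  have hnorm : ∀ x, ‖Q x‖ = |(T ℝ (2 * n : ℤ)).eval (a * |cos ((x - c₀) / 2)|)| := fun x => by
    rw [hQ, norm_mul, Complex.norm_exp_I_mul_ofReal, Complex.norm_real, one_mul,
      Real.norm_eq_abs, ← abs_eval_T_real_abs, abs_mul, abs_of_nonneg (zero_le_one.trans ha)]
  have hnorm_c₀ : ‖Q c₀‖ = (T ℝ (2 * n : ℤ)).eval a := by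
    rw [hnorm, sub_self, zero_div, cos_zero, abs_one, mul_one,
      abs_of_nonneg (zero_le_one.trans (one_le_eval_T_real _ ha))]
  have hnorm_le : ∀ x, ‖Q x‖ ≤ ‖Q c₀‖ := fun x => by
    rw [hnorm, hnorm_c₀]
    refine abs_eval_T_real_le_eval _ ha ?_
    rw [abs_mul, abs_of_nonneg (zero_le_one.trans ha), abs_abs]
    exact mul_le_of_le_one_right (zero_le_one.trans ha) (abs_cos_le_one _)
  have hsublevel : {x ∈ Ico 0 (2 * π) | ‖Q x‖ ≤ 1}
      = {x | |cos ((x - c₀) / 2)| ≤ cos (s / 4)} ∩ Ico 0 (2 * π) := by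
    ext x
    simp only [mem_inter_iff, mem_ofPred_eq, hnorm, and_comm,
      ← abs_eval_T_real_le_one_iff (by omega : (2 * n : ℤ) ≠ 0), a, one_div_mul_eq_div, abs_div,
      abs_abs, abs_of_pos hcos_pos, div_le_one hcos_pos]
  refine ⟨?_, ?_, ?_, hnorm_c₀⟩
  · refine exists_coeff_of_mem_trigPolyDegreeLE ?_
    rw [show Q = Complex.exp (Complex.I * c₁) • _ from funext hQ]
    exact smul_mem _ _ (eval_T_two_mul_mul_cos_half_sub_mem_trigPolyDegreeLE n a c₀)
  · rw [hsublevel, volume_abs_cos_half_sub_le_inter_Ico c₀ (by linarith) (by linarith)]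
    ring_nf
  · have hper : Function.Periodic (fun x => ‖Q x‖) (2 * π) := by
      simpa only [Function.comp_def, ← hnorm] using
        (abs_cos_half_sub_periodic c₀).comp fun g => |(T ℝ (2 * n : ℤ)).eval (a * g)|
    exact hper.iSup_Ico_eq two_pi_pos hnorm_le
end

section
/- Let n ≥ 1 be an integer, let E be a nonempty closed subset of the unit circle {ζ ∈ ℂ : |ζ| = 1}, and let c ∈ ℝ with e^{ic} ∉ E. Let T be a polynomial of degree at most n with complex coefficients such that |T(ζ)| ≤ 1 for all ζ ∈ E, and suppose T is extremal at e^{ic}: for every polynomial P of degree at most n with |P(ζ)| ≤ 1 for all ζ ∈ E, one has |P(e^{ic})| ≤ |T(e^{ic})|. Then there is no w ∈ ℂ with 0 < |w| < 1 such that T(w) = 0 and T(1/\bar{w}) = 0. -/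
/-!
Write `T = (X - w)(w̄X - 1) Q`; on the unit circle the quadratic factor has modulus `|ζ - w|²`.
For suitable `a` (on the circle through `w`, `1 / w̄` and `z = e^{ic}`) one has
`|ζ - a|² = l |ζ - w|² - g |ζ - z|²` for all `|ζ| = 1`, with `0 < g < l`. Since `E` keeps a
positive distance from `z`, a multiple of `(X - a)(āX - 1) Q` is still bounded by `|T| ≤ 1` on `E`
but exceeds `|T(z)|`, contradicting extremality.
-/

open Polynomial ComplexConjugate

/-- Its zeros are `a` and `1 / ā`. -/
noncomputable def circleQuadratic (a : ℂ) : ℂ[X] := (X - C a) * (C (conj a) * X - 1)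

lemma natDegree_circleQuadratic_le (a : ℂ) : (circleQuadratic a).natDegree ≤ 2 := by
  unfold circleQuadratic; compute_degree

lemma natDegree_circleQuadratic {a : ℂ} (ha : a ≠ 0) : (circleQuadratic a).natDegree = 2 := by
  unfold circleQuadratic; compute_degree!

lemma norm_eval_circleQuadratic (a : ℂ) {ζ : ℂ} (hζ : ‖ζ‖ = 1) :
    ‖(circleQuadratic a).eval ζ‖ = ‖ζ - a‖ ^ 2 := by
  have hreflect : conj a * ζ - 1 = ζ * conj (a - ζ) := by
    have hζζ : ζ * conj ζ = 1 := by rw [Complex.mul_conj, Complex.normSq_eq_norm_sq, hζ]; simp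
    rw [map_sub]; linear_combination hζζ
  simp only [circleQuadratic, eval_mul, eval_sub, eval_X, eval_C, eval_one, hreflect, norm_mul,
    Complex.norm_conj, hζ, one_mul, norm_sub_rev a ζ, sq]

lemma circleQuadratic_dvd {T : ℂ[X]} {w : ℂ} (hw : w ≠ 0) (hw1 : ‖w‖ ≠ 1)
    (h₁ : T.IsRoot w) (h₂ : T.IsRoot (conj w)⁻¹) : circleQuadratic w ∣ T := by
  have hcw : conj w ≠ 0 := by simpa using hw
  have hne : w ≠ (conj w)⁻¹ := by
    intro h
    apply hw1
    have : ‖w‖ * ‖w‖ = 1 := by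
      nth_rewrite 2 [h]; rw [norm_inv, Complex.norm_conj, mul_inv_cancel₀ (norm_ne_zero_iff.mpr hw)]
    nlinarith [norm_nonneg w]
  have hfactor : C (conj w) * ((X - C w) * (X - C (conj w)⁻¹)) = circleQuadratic w := by
    rw [mul_left_comm, mul_sub, ← C_mul, mul_inv_cancel₀ hcw, C_1]; rfl
  rw [← hfactor, (isUnit_C.mpr hcw.isUnit).mul_left_dvd]
  exact (isCoprime_X_sub_C_of_isUnit_sub (sub_ne_zero.mpr hne).isUnit).mul_dvd
    (dvd_iff_isRoot.mpr h₁) (dvd_iff_isRoot.mpr h₂)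

lemma norm_sub_sq_pencil {ζ z w : ℂ} {u m : ℝ} (hζ : ‖ζ‖ = 1) (hz : ‖z‖ = 1)
    (hu : u * ‖w - m * z‖ ^ 2 = ‖z - w‖ ^ 2) :
    ‖ζ - (z + u * (w - m * z))‖ ^ 2 = u * ‖ζ - w‖ ^ 2 - (m * u - 1) * ‖ζ - z‖ ^ 2 := by
  have hζ' : ‖ζ‖ ^ 2 = 1 := by rw [hζ]; norm_num
  have hz' : ‖z‖ ^ 2 = 1 := by rw [hz]; norm_num
  simp only [Complex.sq_norm, Complex.normSq_apply, Complex.sub_re, Complex.sub_im, Complex.add_re,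
    Complex.add_im, Complex.mul_re, Complex.mul_im, Complex.ofReal_re, Complex.ofReal_im] at *
  linear_combination u * (m - 1) * hζ' - u * (m - 1) * hz' + u * hu

lemma sq_norm_sub_smul_lt {z w : ℂ} {m : ℝ} (hz : ‖z‖ = 1) (hm : m < 1) (hwm : ‖w‖ ^ 2 < m) :
    ‖w - m * z‖ ^ 2 < m * ‖z - w‖ ^ 2 := by
  have hz' : ‖z‖ ^ 2 = 1 := by rw [hz]; norm_num
  have key : m * ‖z - w‖ ^ 2 - ‖w - m * z‖ ^ 2 = (1 - m) * (m - ‖w‖ ^ 2) := by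
    simp only [Complex.sq_norm, Complex.normSq_apply, Complex.sub_re, Complex.sub_im,
      Complex.mul_re, Complex.mul_im, Complex.ofReal_re, Complex.ofReal_im] at *
    linear_combination (m - m ^ 2) * hz'
  nlinarith [mul_pos (sub_pos.mpr hm) (sub_pos.mpr hwm)]

lemma exists_norm_sub_sq_eq_pencil {z w : ℂ} (hz : ‖z‖ = 1) (hw : ‖w‖ < 1) :
    ∃ a : ℂ, ∃ l g : ℝ, 0 < g ∧ g < l ∧
      ∀ ζ : ℂ, ‖ζ‖ = 1 → ‖ζ - a‖ ^ 2 = l * ‖ζ - w‖ ^ 2 - g * ‖ζ - z‖ ^ 2 := by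
  have hw2 : ‖w‖ ^ 2 < 1 := by nlinarith [norm_nonneg w]
  set m : ℝ := (1 + ‖w‖ ^ 2) / 2 with hm_def
  have hm : m < 1 := by linarith
  have hwm : ‖w‖ ^ 2 < m := by linarith
  have hD : 0 < ‖w - m * z‖ ^ 2 := by
    have : m - ‖w‖ ≤ ‖w - m * z‖ := by
      have := norm_sub_norm_le (m * z : ℂ) w
      rw [norm_mul, hz, Complex.norm_real, Real.norm_of_nonneg (by positivity), mul_one,
        norm_sub_rev] at this
      exact this
    have : 0 < m - ‖w‖ := by nlinarith [sq_nonneg (1 - ‖w‖)]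
    exact pow_pos (by linarith) 2
  set u := ‖z - w‖ ^ 2 / ‖w - m * z‖ ^ 2
  have hu : u * ‖w - m * z‖ ^ 2 = ‖z - w‖ ^ 2 := div_mul_cancel₀ _ hD.ne'
  have hmu : 1 < m * u := by
    rw [← mul_lt_mul_iff_left₀ hD, one_mul, mul_assoc, hu]
    exact sq_norm_sub_smul_lt hz hm hwm
  have hu0 : 0 ≤ u := by positivity
  exact ⟨z + u * (w - m * z), u, m * u - 1, by linarith, by nlinarith,
    fun ζ hζ => norm_sub_sq_pencil hζ hz hu⟩

lemma exists_quadratic_le_norm_sub_sq_on_lt_at {E : Set ℂ} (hE : IsClosed E)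
    (hEcirc : E ⊆ {ζ : ℂ | ‖ζ‖ = 1}) {z w : ℂ} (hz : ‖z‖ = 1) (hzE : z ∉ E) (hw : ‖w‖ < 1) :
    ∃ S : ℂ[X], S.natDegree ≤ 2 ∧ (∀ ζ ∈ E, ‖S.eval ζ‖ ≤ ‖ζ - w‖ ^ 2) ∧
      ‖z - w‖ ^ 2 < ‖S.eval z‖ := by
  obtain ⟨ε, hε, hball⟩ := Metric.isOpen_iff.mp hE.isOpen_compl z hzE
  obtain ⟨a, l, g, hg, hgl, ha⟩ := exists_norm_sub_sq_eq_pencil hz hw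
  set r := min ε 2
  set δ := g * r ^ 2 / 4 with hδ_def
  have hδ : 0 < δ := by positivity
  have hlδ : 0 < l - δ := by
    have : r ^ 2 ≤ 2 ^ 2 := pow_le_pow_left₀ (by positivity) (min_le_right _ _) 2
    nlinarith
  have hbound : ∀ ζ ∈ E, ‖ζ - a‖ ^ 2 ≤ (l - δ) * ‖ζ - w‖ ^ 2 := by
    intro ζ hζ
    have hζ1 : ‖ζ‖ = 1 := hEcirc hζ
    have hfar : r ≤ ‖ζ - z‖ := min_le_of_left_le <| not_lt.mp fun h =>
      hball (by rwa [Metric.mem_ball, dist_eq_norm]) hζ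
    have hnear : ‖ζ - w‖ ≤ 2 := (norm_sub_le _ _).trans (by rw [hζ1]; linarith)
    have h1 : ‖ζ - w‖ ^ 2 ≤ 2 ^ 2 := pow_le_pow_left₀ (norm_nonneg _) hnear 2
    have h2 : r ^ 2 ≤ ‖ζ - z‖ ^ 2 := pow_le_pow_left₀ (by positivity) hfar 2
    rw [ha ζ hζ1]
    nlinarith [mul_le_mul_of_nonneg_left h1 hδ.le, mul_le_mul_of_nonneg_left h2 hg.le]
  set S := C ((l - δ)⁻¹ : ℂ) * circleQuadratic a
  have heval : ∀ ζ : ℂ, ‖ζ‖ = 1 → ‖S.eval ζ‖ = (l - δ)⁻¹ * ‖ζ - a‖ ^ 2 := by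
    intro ζ hζ
    rw [eval_mul, eval_C, norm_mul, norm_eval_circleQuadratic a hζ, ← Complex.ofReal_sub,
      ← Complex.ofReal_inv, Complex.norm_real, Real.norm_of_nonneg (inv_pos.mpr hlδ).le]
  refine ⟨S, (natDegree_C_mul_le _ _).trans (natDegree_circleQuadratic_le a), fun ζ hζ => ?_, ?_⟩
  · rw [heval ζ (hEcirc hζ), inv_mul_le_iff₀ hlδ]
    exact hbound ζ hζ
  · have hzw : 0 < ‖z - w‖ ^ 2 := pow_pos (by linarith [norm_sub_norm_le z w]) 2
    rw [heval z hz, ha z hz, sub_self, norm_zero, sq 0, mul_zero, mul_zero, sub_zero,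
      lt_inv_mul_iff₀ hlδ]
    nlinarith

theorem extremal_no_symmetric_zeros_general (n : ℕ)
    (E : Set ℂ) (hEclosed : IsClosed E)
    (hEcirc : E ⊆ {ζ : ℂ | ‖ζ‖ = 1})
    (c : ℝ) (hc : Complex.exp (Complex.I * (c : ℂ)) ∉ E)
    (T : Polynomial ℂ) (hTdeg : T.natDegree ≤ n)
    (hTbd : ∀ ζ ∈ E, ‖T.eval ζ‖ ≤ 1)
    (hText : ∀ P : Polynomial ℂ, P.natDegree ≤ n → (∀ ζ ∈ E, ‖P.eval ζ‖ ≤ 1) →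
      ‖P.eval (Complex.exp (Complex.I * (c : ℂ)))‖ ≤
        ‖T.eval (Complex.exp (Complex.I * (c : ℂ)))‖) :
    ¬ ∃ w : ℂ, 0 < ‖w‖ ∧ ‖w‖ < 1 ∧
      T.eval w = 0 ∧ T.eval (((starRingEnd ℂ) w)⁻¹) = 0 := by
  rintro ⟨w, hw0, hw1, hTw, hTw'⟩
  set z := Complex.exp (Complex.I * c)
  have hz : ‖z‖ = 1 := Complex.norm_exp_I_mul_ofReal c
  have hTz : 1 ≤ ‖T.eval z‖ := by simpa using hText 1 (by simp) (by simp)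
  obtain ⟨Q, rfl⟩ := circleQuadratic_dvd (norm_pos_iff.mp hw0) hw1.ne hTw hTw'
  have hnorm : ∀ ζ : ℂ, ‖ζ‖ = 1 → ‖(circleQuadratic w * Q).eval ζ‖ = ‖ζ - w‖ ^ 2 * ‖Q.eval ζ‖ :=
    fun ζ hζ => by rw [eval_mul, norm_mul, norm_eval_circleQuadratic w hζ]
  obtain ⟨hq, hQ⟩ := mul_ne_zero_iff.mp (fun h : circleQuadratic w * Q = 0 => by norm_num [h] at hTz)
  have hQz : 0 < ‖Q.eval z‖ := by
    rw [hnorm z hz] at hTz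
    exact (norm_nonneg _).lt_of_ne fun h => by rw [← h, mul_zero] at hTz; linarith
  obtain ⟨S, hSdeg, hSE, hSz⟩ := exists_quadratic_le_norm_sub_sq_on_lt_at hEclosed hEcirc hz hc hw1
  refine (hText (S * Q) ?_ ?_).not_gt ?_
  · rw [natDegree_mul hq hQ, natDegree_circleQuadratic (norm_pos_iff.mp hw0)] at hTdeg
    exact natDegree_mul_le.trans (by omega)
  · intro ζ hζ
    calc ‖(S * Q).eval ζ‖ = ‖S.eval ζ‖ * ‖Q.eval ζ‖ := by rw [eval_mul, norm_mul]
      _ ≤ ‖ζ - w‖ ^ 2 * ‖Q.eval ζ‖ := by gcongr; exact hSE ζ hζ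
      _ = ‖(circleQuadratic w * Q).eval ζ‖ := (hnorm ζ (hEcirc hζ)).symm
      _ ≤ 1 := hTbd ζ hζ
  · calc ‖(circleQuadratic w * Q).eval z‖ = ‖z - w‖ ^ 2 * ‖Q.eval z‖ := hnorm z hz
      _ < ‖S.eval z‖ * ‖Q.eval z‖ := by gcongr
      _ = ‖(S * Q).eval z‖ := by rw [eval_mul, norm_mul]

/-- Step 1 of Markov's correction method: an extremal polynomial has no pair of
zeros symmetric with respect to the unit circle and lying off the circle. -/
theorem extremal_no_symmetric_zeros (n : ℕ) (hn : 1 ≤ n)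
    (E : Set ℂ) (hEne : E.Nonempty) (hEclosed : IsClosed E)
    (hEcirc : E ⊆ {ζ : ℂ | ‖ζ‖ = 1})
    (c : ℝ) (hc : Complex.exp (Complex.I * (c : ℂ)) ∉ E)
    (T : Polynomial ℂ) (hTdeg : T.natDegree ≤ n)
    (hTbd : ∀ ζ ∈ E, ‖T.eval ζ‖ ≤ 1)
    (hText : ∀ P : Polynomial ℂ, P.natDegree ≤ n → (∀ ζ ∈ E, ‖P.eval ζ‖ ≤ 1) →
      ‖P.eval (Complex.exp (Complex.I * (c : ℂ)))‖ ≤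
        ‖T.eval (Complex.exp (Complex.I * (c : ℂ)))‖) :
    ¬ ∃ w : ℂ, 0 < ‖w‖ ∧ ‖w‖ < 1 ∧
      T.eval w = 0 ∧ T.eval (((starRingEnd ℂ) w)⁻¹) = 0 :=
  extremal_no_symmetric_zeros_general n E hEclosed hEcirc c hc T hTdeg hTbd hText
end

section
/- Let n ≥ 1 be an integer, let E be a nonempty closed subset of the unit circle {ζ ∈ ℂ : |ζ| = 1}, and let c ∈ ℝ with e^{ic} ∉ E. Let T be a polynomial of degree at most n with complex coefficients such that |T(ζ)| ≤ 1 for all ζ ∈ E, and suppose T is extremal at e^{ic}: for every polynomial P of degree at most n with |P(ζ)| ≤ 1 for all ζ ∈ E, one has |P(e^{ic})| ≤ |T(e^{ic})|. Then there is no w ∈ ℂ with |w| = 1 and w ≠ e^{ic} such that w is a zero of T of multiplicity at least 2 (i.e., such that (X − w)² divides T). -/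
/-!
Markov's correction. Write `T = (X - w)² Q` with `|w| = 1` and put `z = e^{ic}`. On the unit
circle `(ζ - u)² = -uζ|ζ - u|²`, so the quadratic `R = (1 + ε)(X - w)² - δ(w/z)(X - z)²`
satisfies `|R(ζ)| = |(1 + ε)|ζ - w|² - δ|ζ - z|²|` there. As `E` keeps a positive distance `d`
from `z` and `|Q| ≤ M` on `E`, the choice `δ = 1/(4M)`, `ε = δd²/4` keeps `|RQ| ≤ 1` on `E`,
while `(RQ)(z) = (1 + ε) T(z)` with `T(z) ≠ 0` (compare `T` with the constant `1`). This
contradicts the extremality of `T`.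
-/

open Polynomial

lemma IsClosed.exists_pos_forall_le_dist {α : Type*} [PseudoMetricSpace α] {s : Set α}
    (hs : IsClosed s) {x : α} (hx : x ∉ s) : ∃ d > 0, ∀ y ∈ s, d ≤ dist y x := by
  obtain ⟨d, hd, hball⟩ := Metric.isOpen_iff.1 hs.isOpen_compl x hx
  exact ⟨d, hd, fun y hy => not_lt.1 fun h => hball (Metric.mem_ball.2 h) hy⟩

lemma abs_one_add_mul_sub_mul_le_one {a y ε q : ℝ} (ha : 0 ≤ a) (hε : 0 ≤ ε) (hq : 0 ≤ q)
    (hεy : ε * a ≤ y) (haq : a * q ≤ 1) (hyq : y * q ≤ 1) : |(1 + ε) * a - y| * q ≤ 1 := by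
  have h : |(1 + ε) * a - y| ≤ max a y := by
    rw [show (1 + ε) * a - y = a - (y - ε * a) by ring]
    exact abs_sub_le_of_nonneg_of_le ha (le_max_left _ _) (sub_nonneg.2 hεy)
      ((sub_le_self _ (mul_nonneg hε ha)).trans (le_max_right _ _))
  calc |(1 + ε) * a - y| * q ≤ max a y * q := mul_le_mul_of_nonneg_right h hq
    _ = max (a * q) (y * q) := max_mul_of_nonneg _ _ hq
    _ ≤ 1 := max_le haq hyq

lemma Complex.sq_sub_eq_neg_mul_sq_norm {u ζ : ℂ} (hu : ‖u‖ = 1) (hζ : ‖ζ‖ = 1) :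
    (ζ - u) ^ 2 = -(u * ζ) * ((‖ζ - u‖ ^ 2 : ℝ) : ℂ) := by
  have hu0 : u ≠ 0 := norm_ne_zero_iff.1 (by simp [hu])
  have hζ0 : ζ ≠ 0 := norm_ne_zero_iff.1 (by simp [hζ])
  rw [Complex.ofReal_pow, ← Complex.mul_conj', map_sub, ← Complex.inv_eq_conj hζ,
    ← Complex.inv_eq_conj hu]
  field_simp
  ring

lemma Complex.norm_sub_sq_le_four {u ζ : ℂ} (hu : ‖u‖ = 1) (hζ : ‖ζ‖ = 1) :
    ‖ζ - u‖ ^ 2 ≤ 4 := by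
  have : ‖ζ - u‖ ≤ 2 := (norm_sub_le ζ u).trans (by rw [hu, hζ]; norm_num)
  nlinarith [norm_nonneg (ζ - u)]

lemma Complex.norm_quadratic_correction_eq {w z ζ : ℂ} (hw : ‖w‖ = 1) (hz : ‖z‖ = 1)
    (hζ : ‖ζ‖ = 1) (ε δ : ℝ) :
    ‖(1 + ε) * (ζ - w) ^ 2 - δ * (w / z) * (ζ - z) ^ 2‖ =
      |(1 + ε) * ‖ζ - w‖ ^ 2 - δ * ‖ζ - z‖ ^ 2| := by
  have hz0 : z ≠ 0 := norm_ne_zero_iff.1 (by simp [hz])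
  have h : (1 + ε) * (ζ - w) ^ 2 - δ * (w / z) * (ζ - z) ^ 2 =
      -(w * ζ) * (((1 + ε) * ‖ζ - w‖ ^ 2 - δ * ‖ζ - z‖ ^ 2 : ℝ) : ℂ) := by
    rw [sq_sub_eq_neg_mul_sq_norm hw hζ, sq_sub_eq_neg_mul_sq_norm hz hζ]
    push_cast
    field_simp
    ring
  rw [h, norm_mul, norm_neg, norm_mul, hw, hζ, Complex.norm_real, Real.norm_eq_abs, one_mul,
    one_mul]

lemma exists_quadratic_correction {E : Set ℂ} (hE : IsClosed E) (hEcirc : E ⊆ {ζ : ℂ | ‖ζ‖ = 1})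
    {w z : ℂ} (hw : ‖w‖ = 1) (hz : ‖z‖ = 1) (hzE : z ∉ E) (Q : ℂ[X])
    (hbd : ∀ ζ ∈ E, ‖((X - C w) ^ 2 * Q).eval ζ‖ ≤ 1) :
    ∃ ε > (0 : ℝ), ∃ R : ℂ[X], R.natDegree ≤ 2 ∧ R.eval z = ((1 + ε : ℝ) : ℂ) * (z - w) ^ 2 ∧
      ∀ ζ ∈ E, ‖(R * Q).eval ζ‖ ≤ 1 := by
  have hEcpt : IsCompact E :=
    (isCompact_sphere (0 : ℂ) 1).of_isClosed_subset hE fun ζ hζ => by simpa using hEcirc hζ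
  obtain ⟨d, hd, hdE⟩ := hE.exists_pos_forall_le_dist hzE
  obtain ⟨M, hM, hMQ⟩ :=
    (hEcpt.image_of_continuousOn Q.continuous.continuousOn).isBounded.exists_pos_norm_le
  set δ : ℝ := (4 * M)⁻¹
  set ε : ℝ := δ * d ^ 2 / 4
  refine ⟨ε, by positivity,
    C ((1 + ε : ℝ) : ℂ) * (X - C w) ^ 2 - C ((δ : ℂ) * (w / z)) * (X - C z) ^ 2,
    by compute_degree, by simp, fun ζ hζE => ?_⟩
  have hζ : ‖ζ‖ = 1 := hEcirc hζE
  have hQ : ‖Q.eval ζ‖ ≤ M := hMQ _ ⟨ζ, hζE, rfl⟩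
  have hT := hbd ζ hζE
  have hdζ : d ^ 2 ≤ ‖ζ - z‖ ^ 2 :=
    pow_le_pow_left₀ hd.le (by simpa [dist_eq_norm] using hdE ζ hζE) 2
  simp only [eval_mul, eval_sub, eval_pow, eval_C, eval_X, norm_mul, norm_pow] at hT ⊢
  push_cast
  rw [Complex.norm_quadratic_correction_eq hw hz hζ]
  refine abs_one_add_mul_sub_mul_le_one (sq_nonneg _) (by positivity) (norm_nonneg _) ?_ hT ?_
  · have ha := Complex.norm_sub_sq_le_four hw hζ
    calc ε * ‖ζ - w‖ ^ 2 ≤ ε * 4 := by gcongr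
      _ = δ * d ^ 2 := by ring
      _ ≤ δ * ‖ζ - z‖ ^ 2 := by gcongr
  · have hb := Complex.norm_sub_sq_le_four hz hζ
    calc δ * ‖ζ - z‖ ^ 2 * ‖Q.eval ζ‖ ≤ δ * 4 * M := by gcongr
      _ = 1 := by simp only [δ]; field_simp

theorem extremal_simple_zeros_on_circle_general (n : ℕ)
    (E : Set ℂ) (hEclosed : IsClosed E)
    (hEcirc : E ⊆ {ζ : ℂ | ‖ζ‖ = 1})
    (c : ℝ) (hc : Complex.exp (Complex.I * (c : ℂ)) ∉ E)
    (T : Polynomial ℂ) (hTdeg : T.natDegree ≤ n)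
    (hTbd : ∀ ζ ∈ E, ‖T.eval ζ‖ ≤ 1)
    (hText : ∀ P : Polynomial ℂ, P.natDegree ≤ n → (∀ ζ ∈ E, ‖P.eval ζ‖ ≤ 1) →
      ‖P.eval (Complex.exp (Complex.I * (c : ℂ)))‖ ≤
        ‖T.eval (Complex.exp (Complex.I * (c : ℂ)))‖) :
    ¬ ∃ w : ℂ, ‖w‖ = 1 ∧ w ≠ Complex.exp (Complex.I * (c : ℂ)) ∧
      (Polynomial.X - Polynomial.C w) ^ 2 ∣ T := by
  rintro ⟨w, hw, -, Q, rfl⟩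
  set z := Complex.exp (Complex.I * (c : ℂ))
  have hz : ‖z‖ = 1 := by simp [z, Complex.norm_exp]
  have hTz : 1 ≤ ‖((X - C w) ^ 2 * Q).eval z‖ := by simpa using hText 1 (by simp) (by simp)
  have hQdeg : Q.natDegree + 2 ≤ n := by
    have hQ : Q ≠ 0 := by rintro rfl; norm_num at hTz
    rw [natDegree_mul (pow_ne_zero _ (X_sub_C_ne_zero w)) hQ, natDegree_pow,
      natDegree_X_sub_C] at hTdeg
    omega
  obtain ⟨ε, hε, R, hRdeg, hRz, hRE⟩ := exists_quadratic_correction hEclosed hEcirc hw hz hc Q hTbd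
  have hgain := hText (R * Q) (natDegree_mul_le.trans (by omega)) hRE
  rw [eval_mul, hRz, mul_assoc, norm_mul, Complex.norm_real, Real.norm_eq_abs,
    abs_of_pos (by positivity)] at hgain
  simp only [eval_mul, eval_pow, eval_sub, eval_X, eval_C] at hTz hgain
  nlinarith

/-- Step 2 of Markov's correction method: all zeros of an extremal polynomial on the
unit circle (other than the evaluation point) are simple. -/
theorem extremal_simple_zeros_on_circle (n : ℕ) (hn : 1 ≤ n)
    (E : Set ℂ) (hEne : E.Nonempty) (hEclosed : IsClosed E)
    (hEcirc : E ⊆ {ζ : ℂ | ‖ζ‖ = 1})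
    (c : ℝ) (hc : Complex.exp (Complex.I * (c : ℂ)) ∉ E)
    (T : Polynomial ℂ) (hTdeg : T.natDegree ≤ n)
    (hTbd : ∀ ζ ∈ E, ‖T.eval ζ‖ ≤ 1)
    (hText : ∀ P : Polynomial ℂ, P.natDegree ≤ n → (∀ ζ ∈ E, ‖P.eval ζ‖ ≤ 1) →
      ‖P.eval (Complex.exp (Complex.I * (c : ℂ)))‖ ≤
        ‖T.eval (Complex.exp (Complex.I * (c : ℂ)))‖) :
    ¬ ∃ w : ℂ, ‖w‖ = 1 ∧ w ≠ Complex.exp (Complex.I * (c : ℂ)) ∧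
      (Polynomial.X - Polynomial.C w) ^ 2 ∣ T :=
  extremal_simple_zeros_on_circle_general n E hEclosed hEcirc c hc T hTdeg hTbd hText
end
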